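/- Let $\mathbf{P}_i$ be the set of closed walks of length $T$ from a fixed station $\sigma_i$ in a finite graph (with self-loops allowed), and define $A_i \subseteq \mathbf{P}_i$ as a minimum-cardinality subset satisfying: (i) every $p \in A_i$ has at least one stay ($\exists t: p^t = p^{t+1}$), and (ii) every $q \in \mathbf{P}_i \setminus A_i$ is dominated by some $p \in A_i$ (every stay of $q$ is a stay of $p$ at the same time and cell). Then, for any task specifications with nonnegative values, $\max_{\mathbf{p} \in \mathbf{P}} f(\mathbf{p}) = \max_{\mathbf{p} \in A} f(\mathbf{p})$, where $\mathbf{P} = \prod_i \mathbf{P}_i$, $A = \prod_i A_i$, and $f$ is the total value of completed tasks. -/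

import Mathlib

open scoped Classical

/-!
Only stays complete tasks, and a dominating trajectory reproduces every stay of the trajectory
it replaces. Replacing each robot's trajectory by a dominating one in `A i` therefore keeps every
completed task completed, so with nonnegative values the objective does not decrease, and the
maximum over the finite set `∏ A i` is also the maximum over `∏ P i`.
-/

theorem exists_isGreatest_image_of_forall_exists_le {α β : Type*} [LinearOrder β] (f : α → β)
    {S B : Set α} (hB : B.Finite) (hBne : B.Nonempty) (hBS : B ⊆ S)
    (hle : ∀ x ∈ S, ∃ y ∈ B, f x ≤ f y) :
    ∃ M, IsGreatest (f '' S) M ∧ IsGreatest (f '' B) M := by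
  obtain ⟨m, hmB, hmaxB⟩ := Set.exists_max_image B f hB hBne
  refine ⟨f m, ⟨⟨m, hBS hmB, rfl⟩, ?_⟩, ⟨⟨m, hmB, rfl⟩, ?_⟩⟩
  · rintro _ ⟨x, hx, rfl⟩
    obtain ⟨y, hy, hxy⟩ := hle x hx
    exact hxy.trans (hmaxB y hy)
  · rintro _ ⟨y, hy, rfl⟩
    exact hmaxB y hy

section Stays

variable {V : Type*} {T : ℕ}

def DominatesStays (p q : Fin (T + 1) → V) : Prop :=
  ∀ t : Fin T, q t.castSucc = q t.succ → p t.castSucc = q t.castSucc ∧ p t.succ = q t.castSucc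

theorem dominatesStays_refl (p : Fin (T + 1) → V) : DominatesStays p p :=
  fun _ h => ⟨rfl, h.symm⟩

theorem DominatesStays.stay {p q : Fin (T + 1) → V} (h : DominatesStays p q) {t : Fin T} {x : V}
    (hq : q t.castSucc = x ∧ q t.succ = x) : p t.castSucc = x ∧ p t.succ = x := by
  obtain ⟨h₁, h₂⟩ := h t (hq.1.trans hq.2.symm)
  exact ⟨h₁.trans hq.1, h₂.trans hq.1⟩

variable {R J : Type*} [Fintype R] [Fintype J]

/-- The objective `f` of the paper. -/
noncomputable def completedValue (cstar : J → ℕ) (l : J → V) (ta td : J → ℕ) (v : J → ℝ)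
    (p : R → Fin (T + 1) → V) : ℝ :=
  ∑ j ∈ Finset.univ.filter (fun j =>
      ∃ t : Fin T, ta j ≤ (t : ℕ) ∧ (t : ℕ) + 1 ≤ td j ∧
        cstar j ≤ (Finset.univ.filter
          (fun i => p i t.castSucc = l j ∧ p i t.succ = l j)).card), v j

theorem completedValue_le_of_dominatesStays (cstar : J → ℕ) (l : J → V) (ta td : J → ℕ)
    {v : J → ℝ} (hv : ∀ j, 0 ≤ v j) {p q : R → Fin (T + 1) → V}
    (hpq : ∀ i, DominatesStays (p i) (q i)) :
    completedValue cstar l ta td v q ≤ completedValue cstar l ta td v p := by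
  refine Finset.sum_le_sum_of_subset_of_nonneg ?_ fun j _ _ => hv j
  intro j hj
  simp only [Finset.mem_filter, Finset.mem_univ, true_and] at hj ⊢
  obtain ⟨t, hta, htd, hcard⟩ := hj
  refine ⟨t, hta, htd, hcard.trans (Finset.card_le_card fun i hi => ?_)⟩
  simp only [Finset.mem_filter, Finset.mem_univ, true_and] at hi ⊢
  exact (hpq i).stay hi

end Stays

theorem stmt12_general {V : Type*} [Fintype V] {R : Type*} [Fintype R]
    (adj : V → V → Prop) (σ : R → V) (T : ℕ)
    (hloop : ∀ i, adj (σ i) (σ i))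
    (P : R → Set (Fin (T + 1) → V))
    (hP : ∀ i, P i = {p | p 0 = σ i ∧ p (Fin.last T) = σ i ∧
      ∀ t : Fin T, adj (p t.castSucc) (p t.succ)})
    (A : R → Set (Fin (T + 1) → V))
    (hAsub : ∀ i, A i ⊆ P i)
    (hdom : ∀ i, ∀ q ∈ P i \ A i, ∃ p ∈ A i, ∀ t : Fin T, q t.castSucc = q t.succ →
      p t.castSucc = q t.castSucc ∧ p t.succ = q t.castSucc)
    {J : Type*} [Fintype J] (cstar : J → ℕ) (l : J → V) (ta td : J → ℕ)
    (v : J → ℝ) (hv : ∀ j, 0 ≤ v j)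
    (f : (R → Fin (T + 1) → V) → ℝ)
    (hf : ∀ p, f p = ∑ j ∈ Finset.univ.filter (fun j =>
      ∃ t : Fin T, ta j ≤ (t : ℕ) ∧ (t : ℕ) + 1 ≤ td j ∧
        cstar j ≤ (Finset.univ.filter
          (fun i => p i t.castSucc = l j ∧ p i t.succ = l j)).card), v j) :
    ∃ M : ℝ, IsGreatest (f '' {p | ∀ i, p i ∈ P i}) M ∧
      IsGreatest (f '' {p | ∀ i, p i ∈ A i}) M := by
  have hrepl : ∀ i, ∀ q ∈ P i, ∃ p ∈ A i, DominatesStays p q := fun i q hq =>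
    if hqA : q ∈ A i then ⟨q, hqA, dominatesStays_refl q⟩ else hdom i q ⟨hq, hqA⟩
  have hconst : ∀ i, (fun _ => σ i) ∈ P i := fun i => by
    rw [hP i]
    exact ⟨rfl, rfl, fun _ => hloop i⟩
  choose a haA using fun i => hrepl i _ (hconst i)
  refine exists_isGreatest_image_of_forall_exists_le f (Set.toFinite _) ⟨a, fun i => haA i |>.1⟩
    (fun p hp i => hAsub i (hp i)) fun q hq => ?_
  choose p hpA hpq using fun i => hrepl i (q i) (hq i)
  refine ⟨p, hpA, ?_⟩
  rw [hf, hf]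
  exact completedValue_le_of_dominatesStays cstar l ta td hv hpq

/-- Lemma 1: reducing each robot's feasible trajectories to a minimum-cardinality subset of
trajectories with a stay that dominate all excluded trajectories preserves the maximum total
value of completed tasks. -/
theorem stmt12 {V : Type*} [Fintype V] {R : Type*} [Fintype R]
    (adj : V → V → Prop) (σ : R → V) (T : ℕ) (hT : 1 ≤ T)
    (hloop : ∀ i, adj (σ i) (σ i))
    (P : R → Set (Fin (T + 1) → V))
    (hP : ∀ i, P i = {p | p 0 = σ i ∧ p (Fin.last T) = σ i ∧
      ∀ t : Fin T, adj (p t.castSucc) (p t.succ)})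
    (A : R → Set (Fin (T + 1) → V))
    (hAsub : ∀ i, A i ⊆ P i)
    (hstay : ∀ i, ∀ p ∈ A i, ∃ t : Fin T, p t.castSucc = p t.succ)
    (hdom : ∀ i, ∀ q ∈ P i \ A i, ∃ p ∈ A i, ∀ t : Fin T, q t.castSucc = q t.succ →
      p t.castSucc = q t.castSucc ∧ p t.succ = q t.castSucc)
    (hmin : ∀ i, ∀ B ⊆ P i, (∀ p ∈ B, ∃ t : Fin T, p t.castSucc = p t.succ) →
      (∀ q ∈ P i \ B, ∃ p ∈ B, ∀ t : Fin T, q t.castSucc = q t.succ →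
        p t.castSucc = q t.castSucc ∧ p t.succ = q t.castSucc) →
      (A i).ncard ≤ B.ncard)
    {J : Type*} [Fintype J] (cstar : J → ℕ) (l : J → V) (ta td : J → ℕ)
    (v : J → ℝ) (hv : ∀ j, 0 ≤ v j)
    (f : (R → Fin (T + 1) → V) → ℝ)
    (hf : ∀ p, f p = ∑ j ∈ Finset.univ.filter (fun j =>
      ∃ t : Fin T, ta j ≤ (t : ℕ) ∧ (t : ℕ) + 1 ≤ td j ∧
        cstar j ≤ (Finset.univ.filter
          (fun i => p i t.castSucc = l j ∧ p i t.succ = l j)).card), v j) :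
    ∃ M : ℝ, IsGreatest (f '' {p | ∀ i, p i ∈ P i}) M ∧
      IsGreatest (f '' {p | ∀ i, p i ∈ A i}) M :=
  stmt12_general adj σ T hloop P hP A hAsub hdom cstar l ta td v hv f hf
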